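/- arXiv:2201.00338 — 2 statements merged into one kernel-verified Lean document; each statement's English description precedes it below -/
import Mathlib

section
/- Let H be a separable real Hilbert space with orthonormal basis (φ_λ)_{λ∈Λ} over a countable index set Λ, and (κ_λ)_{λ∈Λ} weights with κ_λ ≥ a > 0. Let h⋆ ∈ H be sparse and η ∈ ∂‖h⋆‖_{1,κ} a subgradient of the weighted ℓ¹-norm at h⋆. Then for every h ∈ H, the Bregman distance satisfies D_η^{‖·‖_{1,κ}}(h, h⋆) ≥ m[η] · Σ_{λ∉Ω[η]} |⟨φ_λ, h⟩|, where Ω[η] := {λ ∈ Λ : |⟨φ_λ, η⟩| = κ_λ} and m[η] := inf{κ_λ − |⟨φ_λ, η⟩| : λ ∉ Ω[η]}. -/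
open scoped ENNReal InnerProductSpace

noncomputable section

/-- `ξ` is a subgradient of the extended-real-valued functional `Q` at `xs`. -/
def IsSubgrad {X : Type*} [NormedAddCommGroup X] [InnerProductSpace ℝ X]
    (Q : X → ℝ≥0∞) (xs ξ : X) : Prop :=
  ∀ x, (Q xs : EReal) + ((⟪ξ, x - xs⟫_ℝ : ℝ) : EReal) ≤ (Q x : EReal)

/-- The Bregman distance `D_ξ^Q(x, xs) := Q(x) - Q(xs) - ⟪ξ, x - xs⟫`. -/
def Breg {X : Type*} [NormedAddCommGroup X] [InnerProductSpace ℝ X]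
    (Q : X → ℝ≥0∞) (ξ xs x : X) : EReal :=
  (Q x : EReal) - (Q xs : EReal) - ((⟪ξ, x - xs⟫_ℝ : ℝ) : EReal)

/-- The weighted ℓ¹-norm `‖h‖_{1,κ} = Σ_λ κ_λ |⟪φ_λ, h⟫|`. -/
def WNorm1 {H : Type*} [NormedAddCommGroup H] [InnerProductSpace ℝ H] {Λ : Type*}
    (φ : HilbertBasis Λ ℝ H) (κ : Λ → ℝ) (h : H) : ℝ≥0∞ :=
  ∑' l, ENNReal.ofReal (κ l * |⟪φ l, h⟫_ℝ|)

/-! Testing the subgradient inequality at `hstar + t • φ l` shows that `⟪φ l, η⟫` is a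
subgradient of `κ l * |·|` at `⟪φ l, hstar⟫`, so `|⟪φ l, η⟫| ≤ κ l` and
`⟪φ l, η⟫ * ⟪φ l, hstar⟫ = κ l * |⟪φ l, hstar⟫|`; testing it at `0` shows `‖hstar‖_{1,κ} < ∞`.
By Parseval the Bregman distance is then the sum of the terms
`κ l * |⟪φ l, h⟫| - ⟪φ l, η⟫ * ⟪φ l, h⟫ ≥ (κ l - |⟪φ l, η⟫|) * |⟪φ l, h⟫| ≥ 0`,
and keeping only the terms with `l ∉ Ω[η]` gives the bound. -/

namespace IsSubgrad

variable {X : Type*} [NormedAddCommGroup X] [InnerProductSpace ℝ X] {Q : X → ℝ≥0∞} {xs ξ : X}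

theorem ne_top (hsub : IsSubgrad Q xs ξ) {x : X} (hx : Q x ≠ ⊤) : Q xs ≠ ⊤ := by
  intro htop
  have := hsub x
  rw [htop, EReal.coe_ennreal_top, EReal.top_add_coe, top_le_iff, ← EReal.coe_ennreal_top] at this
  exact hx (EReal.coe_ennreal_injective this)

theorem toReal_add_inner_le (hsub : IsSubgrad Q xs ξ) (hxs : Q xs ≠ ⊤) {x : X} (hx : Q x ≠ ⊤) :
    (Q xs).toReal + ⟪ξ, x - xs⟫_ℝ ≤ (Q x).toReal := by
  have := hsub x
  rwa [← EReal.coe_ennreal_toReal hxs, ← EReal.coe_ennreal_toReal hx, ← EReal.coe_add,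
    EReal.coe_le_coe_iff] at this

end IsSubgrad

section Breg

variable {X : Type*} [NormedAddCommGroup X] [InnerProductSpace ℝ X] {Q : X → ℝ≥0∞} {xs ξ x : X}

theorem Breg_eq_top (hxs : Q xs ≠ ⊤) (hx : Q x = ⊤) : Breg Q ξ xs x = ⊤ := by
  rw [Breg, hx, ← EReal.coe_ennreal_toReal hxs, EReal.coe_ennreal_top, EReal.top_sub_coe,
    EReal.top_sub_coe]

theorem Breg_eq_coe (hxs : Q xs ≠ ⊤) (hx : Q x ≠ ⊤) :
    Breg Q ξ xs x = ((Q x).toReal - (Q xs).toReal - ⟪ξ, x - xs⟫_ℝ : ℝ) := by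
  rw [Breg, ← EReal.coe_ennreal_toReal hxs, ← EReal.coe_ennreal_toReal hx, EReal.coe_sub,
    EReal.coe_sub]

end Breg

section AbsSubgrad

variable {e k s : ℝ}

theorem abs_le_of_forall_mul_le_abs_add_sub (hk : 0 ≤ k)
    (h : ∀ t, e * t ≤ k * |s + t| - k * |s|) : |e| ≤ k := by
  have h₁ := h 1
  have h₂ := h (-1)
  have e₁ : |s + 1| ≤ |s| + 1 := by simpa using abs_add_le s 1
  have e₂ : |s + -1| ≤ |s| + 1 := by simpa using abs_add_le s (-1)
  rw [abs_le]
  constructor <;> nlinarith [mul_le_mul_of_nonneg_left e₁ hk, mul_le_mul_of_nonneg_left e₂ hk]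

theorem mul_eq_of_forall_mul_le_abs_add_sub (hk : 0 ≤ k)
    (h : ∀ t, e * t ≤ k * |s + t| - k * |s|) : e * s = k * |s| := by
  have hge := h (-s)
  rw [add_neg_cancel, abs_zero, mul_zero] at hge
  have hle : e * s ≤ k * |s| := calc
    e * s ≤ |e| * |s| := (le_abs_self _).trans (abs_mul e s).le
    _ ≤ k * |s| :=
      mul_le_mul_of_nonneg_right (abs_le_of_forall_mul_le_abs_add_sub hk h) (abs_nonneg s)
  linarith

theorem sub_abs_mul_abs_le_of_mul_eq (c : ℝ) (hs : e * s = k * |s|) :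
    (k - |e|) * |c| ≤ k * |c| - k * |s| - e * (c - s) := by
  have : e * c ≤ |e| * |c| := (le_abs_self _).trans (abs_mul e c).le
  nlinarith

end AbsSubgrad

section WNorm1

variable {H : Type*} [NormedAddCommGroup H] [InnerProductSpace ℝ H] {Λ : Type*}
  (φ : HilbertBasis Λ ℝ H) {κ : Λ → ℝ}

@[simp]
theorem WNorm1_zero : WNorm1 φ κ 0 = 0 := by
  simp [WNorm1]

theorem inner_add_smul_basis [DecidableEq Λ] (x : H) (l m : Λ) (t : ℝ) :
    ⟪φ m, x + t • φ l⟫_ℝ = ⟪φ m, x⟫_ℝ + if m = l then t else 0 := by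
  rw [inner_add_right, real_inner_smul_right, (orthonormal_iff_ite (𝕜 := ℝ)).mp φ.orthonormal m l]
  split_ifs <;> simp

theorem WNorm1_add_smul_add (x : H) (l : Λ) (t : ℝ) :
    WNorm1 φ κ (x + t • φ l) + ENNReal.ofReal (κ l * |⟪φ l, x⟫_ℝ|) =
      WNorm1 φ κ x + ENNReal.ofReal (κ l * |⟪φ l, x⟫_ℝ + t|) := by
  classical
  set T := ∑' m, if m = l then 0 else ENNReal.ofReal (κ m * |⟪φ m, x⟫_ℝ|)
  have hx : WNorm1 φ κ x = ENNReal.ofReal (κ l * |⟪φ l, x⟫_ℝ|) + T :=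
    ENNReal.tsum_eq_add_tsum_ite l
  have hxt : WNorm1 φ κ (x + t • φ l) = ENNReal.ofReal (κ l * |⟪φ l, x⟫_ℝ + t|) + T := by
    rw [WNorm1, ENNReal.tsum_eq_add_tsum_ite l, inner_add_smul_basis, if_pos rfl]
    congr 1
    refine tsum_congr fun m => ?_
    split_ifs with hm <;> simp [inner_add_smul_basis, hm]
  rw [hx, hxt]
  ring

theorem hasSum_WNorm1 (hκ : ∀ l, 0 ≤ κ l) {x : H} (hx : WNorm1 φ κ x ≠ ⊤) :
    HasSum (fun l => κ l * |⟪φ l, x⟫_ℝ|) (WNorm1 φ κ x).toReal := by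
  have hterm : ∀ l, (ENNReal.ofReal (κ l * |⟪φ l, x⟫_ℝ|)).toReal = κ l * |⟪φ l, x⟫_ℝ| :=
    fun l => ENNReal.toReal_ofReal (mul_nonneg (hκ l) (abs_nonneg _))
  have hsum := ENNReal.summable_toReal hx
  rw [WNorm1, ENNReal.tsum_toReal_eq fun _ => ENNReal.ofReal_ne_top]
  simp only [hterm] at hsum ⊢
  exact hsum.hasSum

theorem IsSubgrad.inner_mul_le_WNorm1 (hκ : ∀ l, 0 ≤ κ l) {xs η : H}
    (hsub : IsSubgrad (WNorm1 φ κ) xs η) (hxs : WNorm1 φ κ xs ≠ ⊤) (l : Λ) (t : ℝ) :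
    ⟪φ l, η⟫_ℝ * t ≤ κ l * |⟪φ l, xs⟫_ℝ + t| - κ l * |⟪φ l, xs⟫_ℝ| := by
  have hsplit := WNorm1_add_smul_add φ (κ := κ) xs l t
  have hx : WNorm1 φ κ (xs + t • φ l) ≠ ⊤ := fun htop => by
    rw [htop, top_add] at hsplit
    exact (ENNReal.add_ne_top.2 ⟨hxs, ENNReal.ofReal_ne_top⟩) hsplit.symm
  have hsplit' := congrArg ENNReal.toReal hsplit
  rw [ENNReal.toReal_add hx ENNReal.ofReal_ne_top, ENNReal.toReal_add hxs ENNReal.ofReal_ne_top,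
    ENNReal.toReal_ofReal (mul_nonneg (hκ l) (abs_nonneg _)),
    ENNReal.toReal_ofReal (mul_nonneg (hκ l) (abs_nonneg _))] at hsplit'
  have hsub' := hsub.toReal_add_inner_le hxs hx
  rw [add_sub_cancel_left, real_inner_smul_right, real_inner_comm] at hsub'
  linarith

theorem hasSum_Breg_WNorm1 (hκ : ∀ l, 0 ≤ κ l) {xs x η : H} (hxs : WNorm1 φ κ xs ≠ ⊤)
    (hx : WNorm1 φ κ x ≠ ⊤) :
    HasSum (fun l =>
        κ l * |⟪φ l, x⟫_ℝ| - κ l * |⟪φ l, xs⟫_ℝ| - ⟪φ l, η⟫_ℝ * (⟪φ l, x⟫_ℝ - ⟪φ l, xs⟫_ℝ))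
      ((WNorm1 φ κ x).toReal - (WNorm1 φ κ xs).toReal - ⟪η, x - xs⟫_ℝ) := by
  refine ((hasSum_WNorm1 φ hκ hx).sub (hasSum_WNorm1 φ hκ hxs)).sub ?_
  refine (φ.hasSum_inner_mul_inner η (x - xs)).congr_fun fun l => ?_
  rw [inner_sub_right, real_inner_comm]

end WNorm1

theorem coe_mul_tsum_ofReal_le_of_hasSum {ι : Type*} {f : ι → ℝ} {D : ℝ} (hf : HasSum f D)
    (hf₀ : ∀ i, 0 ≤ f i) {p : ι → Prop} {g : ι → ℝ} {m : ℝ} (hm : 0 ≤ m)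
    (hg : ∀ i, p i → m * g i ≤ f i) :
    (m : EReal) * ((∑' i : {i // p i}, ENNReal.ofReal (g i) : ℝ≥0∞) : EReal) ≤ D := by
  have hD : 0 ≤ D := hf.nonneg hf₀
  rw [← max_eq_left hm, ← max_eq_left hD, ← EReal.coe_ennreal_ofReal, ← EReal.coe_ennreal_ofReal,
    ← EReal.coe_ennreal_mul, EReal.coe_ennreal_le_coe_ennreal_iff, ← ENNReal.tsum_mul_left,
    ← hf.tsum_eq, ENNReal.ofReal_tsum_of_nonneg hf₀ hf.summable]
  calc ∑' i : {i // p i}, ENNReal.ofReal m * ENNReal.ofReal (g i)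
      ≤ ∑' i : {i // p i}, ENNReal.ofReal (f i) := by
        refine ENNReal.tsum_le_tsum fun i => ?_
        rw [← ENNReal.ofReal_mul hm]
        exact ENNReal.ofReal_le_ofReal (hg i i.2)
    _ ≤ ∑' i, ENNReal.ofReal (f i) :=
        ENNReal.tsum_comp_le_tsum_of_injective Subtype.val_injective _

theorem bregman_lower_bound_general
    {H : Type*} [NormedAddCommGroup H] [InnerProductSpace ℝ H]
    {Λ : Type*} (φ : HilbertBasis Λ ℝ H)
    (κ : Λ → ℝ) (a : ℝ) (ha : 0 < a) (hκ : ∀ l, a ≤ κ l)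
    (hstar : H)
    (η : H) (hsub : IsSubgrad (WNorm1 φ κ) hstar η) (h : H) :
    ((sInf ((fun l => κ l - |⟪φ l, η⟫_ℝ|) '' {l : Λ | |⟪φ l, η⟫_ℝ| ≠ κ l}) : ℝ) : EReal) *
        ((∑' l : {l : Λ // |⟪φ l, η⟫_ℝ| ≠ κ l}, ENNReal.ofReal |⟪φ l.1, h⟫_ℝ| : ℝ≥0∞) : EReal)
      ≤ Breg (WNorm1 φ κ) η hstar h := by
  have hκ₀ : ∀ l, 0 ≤ κ l := fun l => ha.le.trans (hκ l)
  have hstar_fin : WNorm1 φ κ hstar ≠ ⊤ := hsub.ne_top (x := 0) (by simp)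
  have hcoord := hsub.inner_mul_le_WNorm1 φ hκ₀ hstar_fin
  have habs l : |⟪φ l, η⟫_ℝ| ≤ κ l := abs_le_of_forall_mul_le_abs_add_sub (hκ₀ l) (hcoord l)
  have hbound l := sub_abs_mul_abs_le_of_mul_eq ⟪φ l, h⟫_ℝ
    (mul_eq_of_forall_mul_le_abs_add_sub (hκ₀ l) (hcoord l))
  have hgap : ∀ x ∈ (fun l => κ l - |⟪φ l, η⟫_ℝ|) '' {l : Λ | |⟪φ l, η⟫_ℝ| ≠ κ l}, 0 ≤ x := by
    rintro _ ⟨l, -, rfl⟩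
    exact sub_nonneg.2 (habs l)
  rcases eq_or_ne (WNorm1 φ κ h) ⊤ with hh_top | hh_fin
  · rw [Breg_eq_top hstar_fin hh_top]
    exact le_top
  rw [Breg_eq_coe hstar_fin hh_fin]
  refine coe_mul_tsum_ofReal_le_of_hasSum (g := fun l => |⟪φ l, h⟫_ℝ|)
    (hasSum_Breg_WNorm1 φ hκ₀ hstar_fin hh_fin) (fun l => ?_) (Real.sInf_nonneg hgap) fun l hl => ?_
  · exact (mul_nonneg (sub_nonneg.2 (habs l)) (abs_nonneg _)).trans (hbound l)
  · exact (mul_le_mul_of_nonneg_right (csInf_le ⟨0, hgap⟩ ⟨l, hl, rfl⟩) (abs_nonneg _)).trans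
      (hbound l)

/-- **Lower bound for the ℓ¹ Bregman distance.**
For a sparse `hstar` and `η ∈ ∂‖hstar‖_{1,κ}`,
`D_η(h, hstar) ≥ m[η] Σ_{λ ∉ Ω[η]} |⟪φ_λ, h⟫|` for all `h`, where
`Ω[η] = {λ : |⟪φ_λ, η⟫| = κ_λ}` and `m[η] = inf {κ_λ - |⟪φ_λ, η⟫| : λ ∉ Ω[η]}`. -/
theorem bregman_lower_bound
    {H : Type*} [NormedAddCommGroup H] [InnerProductSpace ℝ H] [CompleteSpace H]
    {Λ : Type*} [Countable Λ] (φ : HilbertBasis Λ ℝ H)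
    (κ : Λ → ℝ) (a : ℝ) (ha : 0 < a) (hκ : ∀ l, a ≤ κ l)
    (hstar : H) (hsparse : {l : Λ | ⟪φ l, hstar⟫_ℝ ≠ 0}.Finite)
    (η : H) (hsub : IsSubgrad (WNorm1 φ κ) hstar η) (h : H) :
    ((sInf ((fun l => κ l - |⟪φ l, η⟫_ℝ|) '' {l : Λ | |⟪φ l, η⟫_ℝ| ≠ κ l}) : ℝ) : EReal) *
        ((∑' l : {l : Λ // |⟪φ l, η⟫_ℝ| ≠ κ l}, ENNReal.ofReal |⟪φ l.1, h⟫_ℝ| : ℝ≥0∞) : EReal)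
      ≤ Breg (WNorm1 φ κ) η hstar h :=
  bregman_lower_bound_general φ κ a ha hκ hstar η hsub h
end
end

section
/- Let X, H, Y be separable real Hilbert spaces, W : X → H and A : H → Y bounded linear, R : X → [0,∞] proper, convex and weakly lower semicontinuous, (φ_λ)_{λ∈Λ} an orthonormal basis of H with countable Λ, and weights κ_λ ≥ a > 0. Suppose (x⋆, h⋆, y⋆) satisfies W x⋆ = h⋆ and A h⋆ = y⋆, there exist u ∈ H with W*u ∈ ∂R(x⋆) and v ∈ Y with A*v − u ∈ ∂‖h⋆‖_{1,κ}, and the restriction of A to H_{Ω[A*v−u]} := span{φ_λ : λ ∈ Ω[A*v−u]} is injective, where Ω[A*v−u] := {λ : |⟨φ_λ, A*v − u⟩| = κ_λ}. Let C > 0 and take the parameter choice α = Cδ. Then for every δ > 0, every yδ ∈ Y with ‖yδ − y⋆‖ ≤ δ, and every minimizer (xαδ, hαδ) of B_{α,yδ}(x,h) := ½‖W x − h‖² + ½‖A h − yδ‖² + α(R(x) + ‖h‖_{1,κ}), the Bregman distance satisfies D_{W*u}^{R}(xαδ, x⋆) ≤ c δ with c := (1 + C‖(u,v)‖)²/(2C),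 where ‖(u,v)‖ := (‖u‖² + ‖v‖²)^{1/2}. -/
/-!
Test the minimality of `(x, h)` against the exact solution `(x⋆, h⋆)`. Subtracting the
subgradient inequality for `‖·‖_{1,κ}` at `h⋆` and splitting
`⟪W*u, x - x⋆⟫ = ⟪u, W x - h⟫ + ⟪u, h - h⋆⟫`, the `⟪u, h - h⋆⟫` terms cancel and the Bregman
distance `D` satisfies
`α D ≤ ½‖e‖² - (½‖p‖² + α⟪u, p⟫) - (½‖q‖² + α⟪v, q⟫) - α⟪v, e⟫` with `p = W x - h`,
`q = A h - yδ`, `e = yδ - y⋆`. Completing the squares bounds the right side by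
`½(δ + α‖(u, v)‖)²`, which for `α = Cδ` is `½δ²(1 + C‖(u, v)‖)²`.
-/

open scoped ENNReal InnerProductSpace
open Filter

noncomputable section

def ConvexE {X : Type*} [AddCommGroup X] [Module ℝ X] (Q : X → ℝ≥0∞) : Prop :=
  ∀ x y : X, ∀ t : ℝ, 0 ≤ t → t ≤ 1 →
    Q (t • x + (1 - t) • y) ≤ ENNReal.ofReal t * Q x + ENNReal.ofReal (1 - t) * Q y

def WeakLSC {X : Type*} [NormedAddCommGroup X] [NormedSpace ℝ X] (Q : X → ℝ≥0∞) : Prop :=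
  ∀ (x : X) (u : ℕ → X),
    (∀ f : X →L[ℝ] ℝ, Tendsto (fun n => f (u n)) atTop (nhds (f x))) →
    (Q x : EReal) ≤ liminf (fun n => ((Q (u n) : ℝ≥0∞) : EReal)) atTop

open scoped InnerProduct

section Subgradient

variable {X : Type*} [NormedAddCommGroup X] [InnerProductSpace ℝ X]
  {Q : X → ℝ≥0∞} {xs ξ x : X}

theorem IsSubgrad.ne_top_s8 (hξ : IsSubgrad Q xs ξ) (hx : Q x ≠ ∞) : Q xs ≠ ∞ := by
  intro htop
  have h := hξ x
  rw [htop, EReal.coe_ennreal_top, EReal.top_add_coe, top_le_iff] at h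
  exact hx (by simpa using h)

theorem IsSubgrad.toReal_add_inner_le_s8 (hξ : IsSubgrad Q xs ξ) (hxs : Q xs ≠ ∞) (hx : Q x ≠ ∞) :
    (Q xs).toReal + ⟪ξ, x - xs⟫_ℝ ≤ (Q x).toReal := by
  have h := hξ x
  rwa [← EReal.coe_ennreal_toReal hxs, ← EReal.coe_ennreal_toReal hx, ← EReal.coe_add,
    EReal.coe_le_coe_iff] at h

theorem breg_eq_coe (hx : Q x ≠ ∞) (hxs : Q xs ≠ ∞) :
    Breg Q ξ xs x = (((Q x).toReal - (Q xs).toReal - ⟪ξ, x - xs⟫_ℝ : ℝ) : EReal) := by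
  rw [Breg, ← EReal.coe_ennreal_toReal hx, ← EReal.coe_ennreal_toReal hxs, ← EReal.coe_sub,
    ← EReal.coe_sub]

end Subgradient

theorem wNorm1_zero {H Λ : Type*} [NormedAddCommGroup H] [InnerProductSpace ℝ H]
    (φ : HilbertBasis Λ ℝ H) (κ : Λ → ℝ) : WNorm1 φ κ 0 = 0 := by
  simp [WNorm1]

section Functional

variable {X H Y : Type*} [NormedAddCommGroup X] [InnerProductSpace ℝ X]
  [NormedAddCommGroup H] [InnerProductSpace ℝ H] [NormedAddCommGroup Y] [InnerProductSpace ℝ Y]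
  (W : X →L[ℝ] H) (A : H →L[ℝ] Y) (R : X → ℝ≥0∞) (N : H → ℝ≥0∞) (α : ℝ) (y : Y)

/-- The functional `B_{α,y}` of the paper, with `N = ‖·‖_{1,κ}`. -/
def coregFunctional (x : X) (h : H) : ℝ≥0∞ :=
  ENNReal.ofReal (‖W x - h‖ ^ 2 / 2) + ENNReal.ofReal (‖A h - y‖ ^ 2 / 2) +
    ENNReal.ofReal α * (R x + N h)

variable {W A R N α y}

theorem coregFunctional_ne_top {x : X} {h : H} (hfin : R x + N h ≠ ∞) :
    coregFunctional W A R N α y x h ≠ ∞ :=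
  ENNReal.add_ne_top.2 ⟨ENNReal.add_ne_top.2 ⟨ENNReal.ofReal_ne_top, ENNReal.ofReal_ne_top⟩,
    ENNReal.mul_ne_top ENNReal.ofReal_ne_top hfin⟩

theorem coregFunctional_eq_ofReal (hα : 0 ≤ α) {x : X} {h : H} (hR : R x ≠ ∞) (hN : N h ≠ ∞) :
    coregFunctional W A R N α y x h = ENNReal.ofReal
      (‖W x - h‖ ^ 2 / 2 + ‖A h - y‖ ^ 2 / 2 + α * ((R x).toReal + (N h).toReal)) := by
  rw [coregFunctional, ← ENNReal.ofReal_toReal hR, ← ENNReal.ofReal_toReal hN,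
    ← ENNReal.ofReal_add ENNReal.toReal_nonneg ENNReal.toReal_nonneg, ← ENNReal.ofReal_mul hα,
    ← ENNReal.ofReal_add (by positivity) (by positivity),
    ← ENNReal.ofReal_add (by positivity) (by positivity),
    ENNReal.toReal_ofReal ENNReal.toReal_nonneg, ENNReal.toReal_ofReal ENNReal.toReal_nonneg]

theorem penalty_ne_top_of_coregFunctional_le (hα : 0 < α) {x x' : X} {h h' : H}
    (hle : coregFunctional W A R N α y x h ≤ coregFunctional W A R N α y x' h')
    (hfin : R x' + N h' ≠ ∞) : R x + N h ≠ ∞ := by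
  intro htop
  have hpen : ENNReal.ofReal α * (R x + N h) ≤ coregFunctional W A R N α y x h := le_add_self
  rw [htop, ENNReal.mul_top (ENNReal.ofReal_pos.2 hα).ne', top_le_iff] at hpen
  exact coregFunctional_ne_top hfin (top_le_iff.1 (hpen ▸ hle))

theorem toReal_le_of_coregFunctional_le (hα : 0 ≤ α) {x x' : X} {h h' : H}
    (hR : R x ≠ ∞) (hN : N h ≠ ∞) (hR' : R x' ≠ ∞) (hN' : N h' ≠ ∞)
    (hle : coregFunctional W A R N α y x h ≤ coregFunctional W A R N α y x' h') :
    ‖W x - h‖ ^ 2 / 2 + ‖A h - y‖ ^ 2 / 2 + α * ((R x).toReal + (N h).toReal) ≤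
      ‖W x' - h'‖ ^ 2 / 2 + ‖A h' - y‖ ^ 2 / 2 + α * ((R x').toReal + (N h').toReal) := by
  rwa [coregFunctional_eq_ofReal hα hR hN, coregFunctional_eq_ofReal hα hR' hN',
    ENNReal.ofReal_le_ofReal_iff (by positivity)] at hle

end Functional

theorem neg_mul_inner_le_half_sq {E : Type*} [NormedAddCommGroup E] [InnerProductSpace ℝ E]
    (α : ℝ) (u p : E) : -(α * ⟪u, p⟫_ℝ) ≤ ‖p‖ ^ 2 / 2 + α ^ 2 * ‖u‖ ^ 2 / 2 := by
  have h := norm_add_sq_real p (α • u)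
  rw [real_inner_smul_right, real_inner_comm, norm_smul, mul_pow, Real.norm_eq_abs, sq_abs] at h
  nlinarith [sq_nonneg ‖p + α • u‖]

section Estimate

variable {X H Y : Type*} [NormedAddCommGroup X] [InnerProductSpace ℝ X] [CompleteSpace X]
  [NormedAddCommGroup H] [InnerProductSpace ℝ H] [CompleteSpace H]
  [NormedAddCommGroup Y] [InnerProductSpace ℝ Y] [CompleteSpace Y]
  {W : X →L[ℝ] H} {A : H →L[ℝ] Y} {xs x : X} {hs h u : H} {ys y v : Y}
  {α r₀ r₁ n₀ n₁ : ℝ}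

theorem mul_bregman_le_of_variational (hα : 0 ≤ α) (hWx : W xs = hs) (hAh : A hs = ys)
    (hmin : ‖W x - h‖ ^ 2 / 2 + ‖A h - y‖ ^ 2 / 2 + α * (r₁ + n₁) ≤
      ‖W xs - hs‖ ^ 2 / 2 + ‖A hs - y‖ ^ 2 / 2 + α * (r₀ + n₀))
    (hN : n₀ + ⟪(A†) v - u, h - hs⟫_ℝ ≤ n₁) :
    α * (r₁ - r₀ - ⟪(W†) u, x - xs⟫_ℝ) ≤
      ‖y - ys‖ ^ 2 / 2 + α ^ 2 * (‖u‖ ^ 2 + ‖v‖ ^ 2) / 2 + α * (‖v‖ * ‖y - ys‖) := by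
  have hsplitW : ⟪(W†) u, x - xs⟫_ℝ = ⟪u, W x - h⟫_ℝ + ⟪u, h - hs⟫_ℝ := by
    rw [ContinuousLinearMap.adjoint_inner_left, ← inner_add_right, map_sub, hWx]
    abel_nf
  have hsplitA : ⟪(A†) v - u, h - hs⟫_ℝ = ⟪v, A h - y⟫_ℝ + ⟪v, y - ys⟫_ℝ - ⟪u, h - hs⟫_ℝ := by
    rw [inner_sub_left, ContinuousLinearMap.adjoint_inner_left, ← inner_add_right, map_sub, hAh]
    abel_nf
  have hexact : ‖W xs - hs‖ = 0 := by rw [hWx, sub_self, norm_zero]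
  have hdata : ‖A hs - y‖ = ‖y - ys‖ := by rw [hAh, norm_sub_rev]
  have hp := neg_mul_inner_le_half_sq α u (W x - h)
  have hq := neg_mul_inner_le_half_sq α v (A h - y)
  have he : -(α * (‖v‖ * ‖y - ys‖)) ≤ α * ⟪v, y - ys⟫_ℝ := by
    simpa only [mul_neg] using
      mul_le_mul_of_nonneg_left (abs_le.1 (abs_real_inner_le_norm v (y - ys))).1 hα
  rw [hexact, hdata] at hmin
  rw [hsplitA] at hN
  rw [hsplitW]
  nlinarith [mul_le_mul_of_nonneg_left hN hα]

theorem bregman_le_rate_of_variational {C δ : ℝ} (hC : 0 < C) (hδ : 0 < δ)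
    (hWx : W xs = hs) (hAh : A hs = ys) (hy : ‖y - ys‖ ≤ δ)
    (hmin : ‖W x - h‖ ^ 2 / 2 + ‖A h - y‖ ^ 2 / 2 + C * δ * (r₁ + n₁) ≤
      ‖W xs - hs‖ ^ 2 / 2 + ‖A hs - y‖ ^ 2 / 2 + C * δ * (r₀ + n₀))
    (hN : n₀ + ⟪(A†) v - u, h - hs⟫_ℝ ≤ n₁) :
    r₁ - r₀ - ⟪(W†) u, x - xs⟫_ℝ ≤ (1 + C * Real.sqrt (‖u‖ ^ 2 + ‖v‖ ^ 2)) ^ 2 / (2 * C) * δ := by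
  have hαD := mul_bregman_le_of_variational (mul_pos hC hδ).le hWx hAh hmin hN
  set s := Real.sqrt (‖u‖ ^ 2 + ‖v‖ ^ 2)
  have hs : s ^ 2 = ‖u‖ ^ 2 + ‖v‖ ^ 2 := Real.sq_sqrt (by positivity)
  have hvs : ‖v‖ ≤ s := Real.le_sqrt_of_sq_le (le_add_of_nonneg_left (sq_nonneg _))
  have hbound : ‖y - ys‖ ^ 2 / 2 + (C * δ) ^ 2 * s ^ 2 / 2 + C * δ * (‖v‖ * ‖y - ys‖) ≤
      C * δ * ((1 + C * s) ^ 2 / (2 * C) * δ) := by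
    have hvy : ‖v‖ * ‖y - ys‖ ≤ s * δ :=
      mul_le_mul hvs hy (norm_nonneg _) (hvs.trans' (norm_nonneg _))
    have hyy : ‖y - ys‖ ^ 2 ≤ δ ^ 2 := pow_le_pow_left₀ (norm_nonneg _) hy 2
    field_simp
    nlinarith [mul_le_mul_of_nonneg_left hvy (mul_pos hC hδ).le]
  rw [← hs] at hαD
  exact le_of_mul_le_mul_left (hαD.trans hbound) (mul_pos hC hδ)

end Estimate

theorem relaxed_bregman_rate_general
    {X H Y : Type*} [NormedAddCommGroup X] [InnerProductSpace ℝ X] [CompleteSpace X]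
    [NormedAddCommGroup H] [InnerProductSpace ℝ H] [CompleteSpace H]
    [NormedAddCommGroup Y] [InnerProductSpace ℝ Y] [CompleteSpace Y]
    {Λ : Type*} (φ : HilbertBasis Λ ℝ H)
    (κ : Λ → ℝ)
    (W : X →L[ℝ] H) (A : H →L[ℝ] Y)
    (R : X → ℝ≥0∞)
    (hjoint : ∃ x, R x + WNorm1 φ κ (W x) ≠ ∞)
    (xstar : X) (hstar : H) (ystar : Y)
    (hWx : W xstar = hstar) (hAh : A hstar = ystar)
    (u : H) (hu : IsSubgrad R xstar (ContinuousLinearMap.adjoint W u))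
    (v : Y) (hv : IsSubgrad (WNorm1 φ κ) hstar (ContinuousLinearMap.adjoint A v - u))
    (C δ : ℝ) (hC : 0 < C) (hδ : 0 < δ)
    (yδ : Y) (hdata : ‖yδ - ystar‖ ≤ δ)
    (xad : X) (had : H)
    (hmin : ∀ (x : X) (h : H),
      ENNReal.ofReal (‖W xad - had‖ ^ 2 / 2) + ENNReal.ofReal (‖A had - yδ‖ ^ 2 / 2) +
          ENNReal.ofReal (C * δ) * (R xad + WNorm1 φ κ had) ≤
        ENNReal.ofReal (‖W x - h‖ ^ 2 / 2) + ENNReal.ofReal (‖A h - yδ‖ ^ 2 / 2) +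
          ENNReal.ofReal (C * δ) * (R x + WNorm1 φ κ h)) :
    Breg R (ContinuousLinearMap.adjoint W u) xstar xad ≤
      (((1 + C * Real.sqrt (‖u‖ ^ 2 + ‖v‖ ^ 2)) ^ 2 / (2 * C) * δ : ℝ) : EReal) := by
  have hB : ∀ x h, coregFunctional W A R (WNorm1 φ κ) (C * δ) yδ xad had ≤
      coregFunctional W A R (WNorm1 φ κ) (C * δ) yδ x h := hmin
  obtain ⟨x₁, hx₁⟩ := hjoint
  have hRs : R xstar ≠ ∞ := hu.ne_top_s8 (ENNReal.add_ne_top.1 hx₁).1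
  have hNs : WNorm1 φ κ hstar ≠ ∞ := hv.ne_top_s8 (x := 0) (wNorm1_zero φ κ ▸ ENNReal.zero_ne_top)
  obtain ⟨hR, hN⟩ := ENNReal.add_ne_top.1
    (penalty_ne_top_of_coregFunctional_le (mul_pos hC hδ) (hB x₁ (W x₁)) hx₁)
  rw [breg_eq_coe hR hRs, EReal.coe_le_coe_iff]
  exact bregman_le_rate_of_variational hC hδ hWx hAh hdata
    (toReal_le_of_coregFunctional_le (mul_pos hC hδ).le hR hN hRs hNs (hB xstar hstar))
    (hv.toReal_add_inner_le_s8 hNs hN)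

/-- **Relaxed ℓ¹ co-regularization: Bregman distance rate.**
Under the source conditions `W*u ∈ ∂R(xstar)`, `A*v - u ∈ ∂‖hstar‖_{1,κ}` and
restricted injectivity of `A` on `H_{Ω[A*v-u]}`, every minimizer
`(xad, had)` of `B_{α,yδ}` with `α = Cδ` satisfies
`D_{W*u}^R(xad, xstar) ≤ (1 + C‖(u,v)‖)²/(2C) · δ`. -/
theorem relaxed_bregman_rate
    {X H Y : Type*} [NormedAddCommGroup X] [InnerProductSpace ℝ X] [CompleteSpace X]
    [TopologicalSpace.SeparableSpace X]
    [NormedAddCommGroup H] [InnerProductSpace ℝ H] [CompleteSpace H]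
    [NormedAddCommGroup Y] [InnerProductSpace ℝ Y] [CompleteSpace Y]
    [TopologicalSpace.SeparableSpace Y]
    {Λ : Type*} [Countable Λ] (φ : HilbertBasis Λ ℝ H)
    (κ : Λ → ℝ) (a : ℝ) (ha : 0 < a) (hκ : ∀ l, a ≤ κ l)
    (W : X →L[ℝ] H) (A : H →L[ℝ] Y)
    (R : X → ℝ≥0∞) (hRproper : ∃ x, R x ≠ ∞) (hRconv : ConvexE R) (hRwlsc : WeakLSC R)
    (hjoint : ∃ x, R x + WNorm1 φ κ (W x) ≠ ∞)
    (xstar : X) (hstar : H) (ystar : Y)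
    (hWx : W xstar = hstar) (hAh : A hstar = ystar)
    (u : H) (hu : IsSubgrad R xstar (ContinuousLinearMap.adjoint W u))
    (v : Y) (hv : IsSubgrad (WNorm1 φ κ) hstar (ContinuousLinearMap.adjoint A v - u))
    (hinj : Set.InjOn A (Submodule.span ℝ ((fun l => φ l) ''
      {l : Λ | |⟪φ l, ContinuousLinearMap.adjoint A v - u⟫_ℝ| = κ l}) : Set H))
    (C δ : ℝ) (hC : 0 < C) (hδ : 0 < δ)
    (yδ : Y) (hdata : ‖yδ - ystar‖ ≤ δ)
    (xad : X) (had : H)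
    (hmin : ∀ (x : X) (h : H),
      ENNReal.ofReal (‖W xad - had‖ ^ 2 / 2) + ENNReal.ofReal (‖A had - yδ‖ ^ 2 / 2) +
          ENNReal.ofReal (C * δ) * (R xad + WNorm1 φ κ had) ≤
        ENNReal.ofReal (‖W x - h‖ ^ 2 / 2) + ENNReal.ofReal (‖A h - yδ‖ ^ 2 / 2) +
          ENNReal.ofReal (C * δ) * (R x + WNorm1 φ κ h)) :
    Breg R (ContinuousLinearMap.adjoint W u) xstar xad ≤
      (((1 + C * Real.sqrt (‖u‖ ^ 2 + ‖v‖ ^ 2)) ^ 2 / (2 * C) * δ : ℝ) : EReal) :=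
  relaxed_bregman_rate_general φ κ W A R hjoint xstar hstar ystar hWx hAh u hu v hv C δ hC hδ yδ
    hdata xad had hmin
end
end
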